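/- arXiv:1612.00406 — 2 statements merged into one kernel-verified Lean document; each statement's English description precedes it below -/
import Mathlib

section
/- For d ≥ 5 there exists a constant C < ∞ such that for all distinct nonzero x, y ∈ ℤ^d, the triple-product sum Σ_{z ∈ ℤ^d \ {0,x,y}} |z|^{−d+2}·|x−z|^{−d+2}·|y−z|^{−d+2} is at most C·(|x|^{−d+4}|y|^{−d+2} + |x|^{−d+2}|y|^{−d+4} + |x−y|^{−d+4}|x|^{−d+2} + |x−y|^{−d+4}|y|^{−d+2}). -/
open scoped BigOperators

noncomputable def nrm {d : ℕ} (x : Fin d → ℤ) : ℝ :=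
  Real.sqrt (∑ i, ((x i : ℝ)) ^ 2)

/-!
Taking the kernels `|a - z| ^ e` with values in `ℝ≥0∞` makes every lattice sum meaningful before
its summability is known. A dyadic shell `2 ^ k ≤ |a - z| < 2 ^ (k + 1)` holds at most
`8 ^ d * 2 ^ (k d)` lattice points, which turns lattice sums into geometric series:
`∑_{0 < |a - z| ≤ R} |a - z| ^ e ≲ R ^ (d + e)` if `d + e > 0`, and
`∑_{|a - z| ≥ R} |a - z| ^ e ≲ R ^ (d + e)` if `d + e < 0`.

For `-d < e` and `2 e < -d` this gives the one-point convolution bound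
`∑_z |a - z| ^ e |b - z| ^ e ≲ |a - b| ^ (d + 2 e)`: by symmetry it suffices to sum over
`|a - z| ≤ |b - z|`, where `|b - z| ≥ |a - b| / 2`, and splitting at `|a - z| = |a - b| / 2`
leaves a ball sum and a tail sum. In the triple sum every `z` has `|a - z| ≥ |a - b| / 2` or
`|b - z| ≥ |a - b| / 2`; bounding that factor by `(|a - b| / 2) ^ e` leaves a one-point
convolution. The theorem is the case `a = 0`, `e = 2 - d`, where `d ≥ 5` is exactly `2 e < -d`.
-/

open scoped ENNReal

theorem ENNReal.tsum_subtype_le_of_subset_of_le {α : Type*} {s t : Set α} {f g : α → ℝ≥0∞}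
    (hst : s ⊆ t) (hfg : ∀ z ∈ s, f z ≤ g z) : ∑' z : s, f z ≤ ∑' z : t, g z :=
  (ENNReal.tsum_le_tsum fun z : s => hfg z z.2).trans (ENNReal.tsum_mono_subtype g hst)

theorem ENNReal.tsum_subtype_le_add_of_subset_union {α : Type*} {s t u : Set α}
    (f : α → ℝ≥0∞) (h : s ⊆ t ∪ u) : ∑' z : s, f z ≤ ∑' z : t, f z + ∑' z : u, f z :=
  (ENNReal.tsum_mono_subtype f h).trans (ENNReal.tsum_union_le f t u)

theorem summable_and_tsum_le_of_tsum_ofReal_le {ι : Type*} {g : ι → ℝ} (hg : ∀ i, 0 ≤ g i)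
    {B : ℝ} (hB : 0 ≤ B) (h : ∑' i, ENNReal.ofReal (g i) ≤ ENNReal.ofReal B) :
    Summable g ∧ ∑' i, g i ≤ B := by
  have hg_sum : Summable g := by
    simpa [ENNReal.toReal_ofReal (hg _)] using
      ENNReal.summable_toReal (ne_top_of_le_ne_top ENNReal.ofReal_ne_top h)
  refine ⟨hg_sum, ?_⟩
  rwa [← ENNReal.ofReal_tsum_of_nonneg hg hg_sum, ENNReal.ofReal_le_ofReal_iff hB] at h

section Dyadic

theorem exists_forall_lt_two_pow_iff (t : ℝ) : ∃ K : ℕ, ∀ k : ℕ, t < 2 ^ k ↔ K ≤ k := by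
  classical
  have h := pow_unbounded_of_one_lt t one_lt_two
  exact ⟨Nat.find h, fun k => ⟨fun hk => Nat.find_min' h hk,
    fun hk => (Nat.find_spec h).trans_le (pow_le_pow_right₀ one_le_two hk)⟩⟩

theorem tsum_ofReal_two_pow_rpow_le_of_neg {p : ℝ} (hp : p < 0) {t : ℝ} (ht : 0 < t) :
    ∑' k : {k : ℕ | t < 2 ^ k}, ENNReal.ofReal (((2 : ℝ) ^ (k : ℕ)) ^ p) ≤
      ENNReal.ofReal (t ^ p / (1 - 2 ^ p)) := by
  obtain ⟨K, hK⟩ := exists_forall_lt_two_pow_iff t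
  have hq0 : 0 ≤ (2 : ℝ) ^ p := by positivity
  have hq1 : (2 : ℝ) ^ p < 1 := Real.rpow_lt_one_of_one_lt_of_neg one_lt_two hp
  have hsub : {k : ℕ | t < 2 ^ k} ⊆ Set.range (K + ·) := fun k hk =>
    ⟨k - K, by have := (hK k).1 hk; simp only; omega⟩
  have hterm (j : ℕ) : ((2 : ℝ) ^ (K + j)) ^ p = (2 ^ K) ^ p * (2 ^ p) ^ j := by
    rw [pow_add, Real.mul_rpow (by positivity) (by positivity), Real.rpow_pow_comm zero_le_two]
  calc _ ≤ ∑' k : Set.range (K + ·), ENNReal.ofReal (((2 : ℝ) ^ (k : ℕ)) ^ p) :=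
        ENNReal.tsum_mono_subtype (fun k : ℕ => ENNReal.ofReal (((2 : ℝ) ^ k) ^ p)) hsub
    _ = ∑' j : ℕ, ENNReal.ofReal ((2 ^ K) ^ p * (2 ^ p) ^ j) := by
        rw [tsum_range (fun k : ℕ => ENNReal.ofReal (((2 : ℝ) ^ k) ^ p)) (add_right_injective K)]
        simp_rw [hterm]
    _ = ENNReal.ofReal ((2 ^ K) ^ p / (1 - 2 ^ p)) := by
        rw [← ENNReal.ofReal_tsum_of_nonneg (fun j => by positivity)
          ((summable_geometric_of_lt_one hq0 hq1).mul_left _), tsum_mul_left,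
          tsum_geometric_of_lt_one hq0 hq1, div_eq_mul_inv]
    _ ≤ _ := ENNReal.ofReal_le_ofReal (div_le_div_of_nonneg_right
          (Real.rpow_le_rpow_of_nonpos ht ((hK K).2 le_rfl).le hp.le) (by linarith))

theorem tsum_ofReal_two_pow_rpow_le_of_pos {p : ℝ} (hp : 0 < p) (t : ℝ) :
    ∑' k : {k : ℕ | (2 : ℝ) ^ k ≤ t}, ENNReal.ofReal (((2 : ℝ) ^ (k : ℕ)) ^ p) ≤
      ENNReal.ofReal (2 ^ p * t ^ p / (2 ^ p - 1)) := by
  obtain ⟨K, hK⟩ := exists_forall_lt_two_pow_iff t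
  have hq1 : 1 < (2 : ℝ) ^ p := Real.one_lt_rpow one_lt_two hp
  have hset : {k : ℕ | (2 : ℝ) ^ k ≤ t} = (Finset.range K : Set ℕ) := by
    refine Set.ext fun k => ?_
    rw [Set.mem_ofPred_eq, Finset.coe_range, Set.mem_Iio, ← not_lt, hK, not_le]
  rw [hset, Finset.tsum_subtype' (Finset.range K) fun k => ENNReal.ofReal (((2 : ℝ) ^ k) ^ p),
    ← ENNReal.ofReal_sum_of_nonneg fun k _ => by positivity]
  simp_rw [← Real.rpow_pow_comm zero_le_two]
  rw [geom_sum_eq hq1.ne']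
  cases K with
  | zero => simp
  | succ m =>
    have hm : (2 : ℝ) ^ m ≤ t := not_lt.mp fun h => by have := (hK m).1 h; omega
    gcongr
    calc ((2 : ℝ) ^ p) ^ (m + 1) - 1 ≤ 2 ^ p * (2 ^ m) ^ p := by
          rw [pow_succ, mul_comm, Real.rpow_pow_comm zero_le_two]; linarith
      _ ≤ 2 ^ p * t ^ p := by gcongr

end Dyadic

section LatticePoints

variable {d : ℕ}

theorem nrm_nonneg (x : Fin d → ℤ) : 0 ≤ nrm x :=
  Real.sqrt_nonneg _

theorem nrm_sub_eq_dist (x y : Fin d → ℤ) :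
    nrm (x - y) = dist (WithLp.toLp 2 fun i => (x i : ℝ) : EuclideanSpace ℝ (Fin d))
      (WithLp.toLp 2 fun i => (y i : ℝ)) := by
  simp [nrm, EuclideanSpace.dist_eq, Int.dist_cast_real, Int.dist_eq, sq_abs]

theorem nrm_sub_comm (x y : Fin d → ℤ) : nrm (x - y) = nrm (y - x) := by
  rw [nrm_sub_eq_dist, nrm_sub_eq_dist, dist_comm]

theorem nrm_sub_triangle_right (a b z : Fin d → ℤ) :
    nrm (a - b) ≤ nrm (a - z) + nrm (b - z) := by
  simp only [nrm_sub_eq_dist]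
  exact dist_triangle_right _ _ _

theorem abs_apply_le_nrm (x : Fin d → ℤ) (i : Fin d) : |(x i : ℝ)| ≤ nrm x := by
  rw [nrm, ← Real.sqrt_sq_eq_abs]
  exact Real.sqrt_le_sqrt (Finset.single_le_sum (f := fun j => (x j : ℝ) ^ 2)
    (fun j _ => sq_nonneg _) (Finset.mem_univ i))

theorem one_le_nrm {x : Fin d → ℤ} (hx : x ≠ 0) : 1 ≤ nrm x := by
  obtain ⟨i, hi⟩ := Function.ne_iff.mp hx
  calc (1 : ℝ) ≤ |(x i : ℝ)| := by exact_mod_cast Int.one_le_abs hi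
    _ ≤ nrm x := abs_apply_le_nrm x i

theorem card_piFinset_Icc_sub_add (a : Fin d → ℤ) (n : ℕ) :
    (Fintype.piFinset fun i => Finset.Icc (a i - n) (a i + n)).card = (2 * n + 1) ^ d := by
  have hcard (i : Fin d) : (Finset.Icc (a i - n) (a i + n)).card = 2 * n + 1 := by
    rw [Int.card_Icc]; omega
  simp [Fintype.card_piFinset, hcard]

theorem mem_piFinset_Icc_of_nrm_sub_lt {a z : Fin d → ℤ} {n : ℕ} (h : nrm (a - z) < n) :
    z ∈ Fintype.piFinset fun i => Finset.Icc (a i - n) (a i + n) := by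
  refine Fintype.mem_piFinset.mpr fun i => Finset.mem_Icc.mpr ?_
  have hi : |a i - z i| < (n : ℤ) := by
    exact_mod_cast (abs_apply_le_nrm (a - z) i).trans_lt h
  rw [abs_lt] at hi
  omega

noncomputable def powKernel (a : Fin d → ℤ) (e : ℝ) (z : Fin d → ℤ) : ℝ≥0∞ :=
  ENNReal.ofReal (nrm (a - z) ^ e)

theorem powKernel_le_ofReal_rpow {a z : Fin d → ℤ} {e r : ℝ} (he : e ≤ 0) (hr : 0 < r)
    (h : r ≤ nrm (a - z)) : powKernel a e z ≤ ENNReal.ofReal (r ^ e) :=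
  ENNReal.ofReal_le_ofReal (Real.rpow_le_rpow_of_nonpos hr h he)

theorem powKernel_mul_self {a z : Fin d → ℤ} (hz : z ≠ a) (e : ℝ) :
    powKernel a e z * powKernel a e z = powKernel a (2 * e) z := by
  have hpos : 0 < nrm (a - z) := one_pos.trans_le (one_le_nrm (sub_ne_zero.mpr hz.symm))
  rw [powKernel, powKernel, ← ENNReal.ofReal_mul (by positivity), ← Real.rpow_add hpos, two_mul]

theorem tsum_powKernel_shell_le (a : Fin d → ℤ) {e : ℝ} (he : e ≤ 0) (k : ℕ) :
    ∑' z : {z : Fin d → ℤ | (2 : ℝ) ^ k ≤ nrm (a - z) ∧ nrm (a - z) < 2 ^ (k + 1)},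
      powKernel a e z ≤ ENNReal.ofReal (8 ^ d * ((2 : ℝ) ^ k) ^ ((d : ℝ) + e)) := by
  set box := Fintype.piFinset fun i =>
    Finset.Icc (a i - (2 ^ (k + 1) : ℕ)) (a i + (2 ^ (k + 1) : ℕ))
  have hshell : {z : Fin d → ℤ | (2 : ℝ) ^ k ≤ nrm (a - z) ∧ nrm (a - z) < 2 ^ (k + 1)} ⊆ box :=
    fun z hz => mem_piFinset_Icc_of_nrm_sub_lt (by exact_mod_cast hz.2)
  have hcard : (box.card : ℝ) ≤ (8 * 2 ^ k) ^ d := by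
    rw [card_piFinset_Icc_sub_add]
    push_cast
    gcongr
    linarith [one_le_pow₀ (M₀ := ℝ) (n := k) one_le_two, pow_succ (2 : ℝ) k]
  calc _ ≤ ∑' _ : (box : Set (Fin d → ℤ)), ENNReal.ofReal (((2 : ℝ) ^ k) ^ e) :=
        ENNReal.tsum_subtype_le_of_subset_of_le hshell fun z hz =>
          powKernel_le_ofReal_rpow he (by positivity) hz.1
    _ = ENNReal.ofReal (box.card * ((2 : ℝ) ^ k) ^ e) := by
        rw [Finset.tsum_subtype' box fun _ => ENNReal.ofReal (((2 : ℝ) ^ k) ^ e),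
          Finset.sum_const, nsmul_eq_mul, ENNReal.ofReal_mul (by positivity),
          ENNReal.ofReal_natCast]
    _ ≤ ENNReal.ofReal ((8 * 2 ^ k) ^ d * ((2 : ℝ) ^ k) ^ e) := by gcongr
    _ = ENNReal.ofReal (8 ^ d * ((2 : ℝ) ^ k) ^ ((d : ℝ) + e)) := by
        rw [Real.rpow_add (by positivity), Real.rpow_natCast, mul_pow, mul_assoc]

theorem tsum_powKernel_le_tsum_dyadic (a : Fin d → ℤ) {e : ℝ} (he : e ≤ 0)
    {s : Set (Fin d → ℤ)} {K : Set ℕ} (hs : ∀ z ∈ s, z ≠ a ∧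
      ∀ k : ℕ, (2 : ℝ) ^ k ≤ nrm (a - z) → nrm (a - z) < 2 ^ (k + 1) → k ∈ K) :
    ∑' z : s, powKernel a e z ≤
      ENNReal.ofReal (8 ^ d) * ∑' k : K, ENNReal.ofReal (((2 : ℝ) ^ (k : ℕ)) ^ ((d : ℝ) + e)) := by
  have hcover :
      s ⊆ ⋃ k ∈ K, {z | (2 : ℝ) ^ k ≤ nrm (a - z) ∧ nrm (a - z) < 2 ^ (k + 1)} := by
    intro z hz
    obtain ⟨hza, hK⟩ := hs z hz
    obtain ⟨k, hk⟩ := exists_nat_pow_near (one_le_nrm (sub_ne_zero.mpr hza.symm)) one_lt_two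
    exact Set.mem_biUnion (hK k hk.1 hk.2) hk
  rw [← ENNReal.tsum_mul_left]
  calc _ ≤ _ := ENNReal.tsum_mono_subtype _ hcover
    _ ≤ _ := ENNReal.tsum_biUnion_le_tsum _ _ _
    _ ≤ _ := ENNReal.tsum_le_tsum fun k =>
          (tsum_powKernel_shell_le a he k).trans_eq (ENNReal.ofReal_mul (by positivity))

theorem exists_tsum_powKernel_ball_le {e : ℝ} (he : e ≤ 0) (hde : 0 < d + e) :
    ∃ C : ℝ, 0 ≤ C ∧ ∀ (a : Fin d → ℤ) (R : ℝ),
      ∑' z : {z | z ≠ a ∧ nrm (a - z) ≤ R}, powKernel a e z ≤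
        ENNReal.ofReal (C * R ^ ((d : ℝ) + e)) := by
  set p : ℝ := d + e
  have hq1 : 1 < (2 : ℝ) ^ p := Real.one_lt_rpow one_lt_two hde
  refine ⟨8 ^ d * 2 ^ p / (2 ^ p - 1), div_nonneg (by positivity) (by linarith), fun a R => ?_⟩
  calc _ ≤ ENNReal.ofReal (8 ^ d) *
        ∑' k : {k : ℕ | (2 : ℝ) ^ k ≤ R}, ENNReal.ofReal (((2 : ℝ) ^ (k : ℕ)) ^ p) :=
        tsum_powKernel_le_tsum_dyadic a he fun z hz => ⟨hz.1, fun k hk _ => hk.trans hz.2⟩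
    _ ≤ ENNReal.ofReal (8 ^ d) * ENNReal.ofReal (2 ^ p * R ^ p / (2 ^ p - 1)) := by
        gcongr
        exact tsum_ofReal_two_pow_rpow_le_of_pos hde R
    _ = _ := by
        rw [← ENNReal.ofReal_mul (by positivity)]
        ring_nf

theorem exists_tsum_powKernel_tail_le {e : ℝ} (hde : d + e < 0) :
    ∃ C : ℝ, 0 ≤ C ∧ ∀ (a : Fin d → ℤ) {R : ℝ}, 0 < R →
      ∑' z : {z | z ≠ a ∧ R ≤ nrm (a - z)}, powKernel a e z ≤
        ENNReal.ofReal (C * R ^ ((d : ℝ) + e)) := by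
  set p : ℝ := d + e
  have he : e ≤ 0 := by linarith [(Nat.cast_nonneg d : (0 : ℝ) ≤ d)]
  have hq1 : (2 : ℝ) ^ p < 1 := Real.rpow_lt_one_of_one_lt_of_neg one_lt_two hde
  refine ⟨8 ^ d / (2 ^ p * (1 - 2 ^ p)), div_nonneg (by positivity)
    (mul_nonneg (by positivity) (by linarith)), fun a R hR => ?_⟩
  have hshell : ∀ z ∈ {z | z ≠ a ∧ R ≤ nrm (a - z)}, z ≠ a ∧ ∀ k : ℕ,
      (2 : ℝ) ^ k ≤ nrm (a - z) → nrm (a - z) < 2 ^ (k + 1) → k ∈ {k : ℕ | R / 2 < 2 ^ k} :=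
    fun z hz => ⟨hz.1, fun k _ hk => by
      have := hz.2.trans_lt hk
      rw [pow_succ] at this
      simp only [Set.mem_ofPred_eq]
      linarith⟩
  calc _ ≤ ENNReal.ofReal (8 ^ d) *
        ∑' k : {k : ℕ | R / 2 < 2 ^ k}, ENNReal.ofReal (((2 : ℝ) ^ (k : ℕ)) ^ p) :=
        tsum_powKernel_le_tsum_dyadic a he hshell
    _ ≤ ENNReal.ofReal (8 ^ d) * ENNReal.ofReal ((R / 2) ^ p / (1 - 2 ^ p)) := by
        gcongr
        exact tsum_ofReal_two_pow_rpow_le_of_neg hde (half_pos hR)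
    _ = _ := by
        rw [← ENNReal.ofReal_mul (by positivity), Real.div_rpow hR.le zero_le_two]
        congr 1
        field_simp

end LatticePoints

section Convolution

variable {d : ℕ}

theorem exists_tsum_powKernel_mul_le_of_nrm_le {e : ℝ} (hde : -(d : ℝ) < e) (hde' : 2 * e < -d) :
    ∃ C : ℝ, 0 ≤ C ∧ ∀ a b : Fin d → ℤ, a ≠ b →
      ∑' z : {z | z ≠ a ∧ z ≠ b ∧ nrm (a - z) ≤ nrm (b - z)}, (powKernel a e * powKernel b e) z ≤
        ENNReal.ofReal (C * nrm (a - b) ^ ((d : ℝ) + 2 * e)) := by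
  have he : e ≤ 0 := by linarith [(Nat.cast_nonneg d : (0 : ℝ) ≤ d)]
  obtain ⟨C₁, hC₁, hball⟩ := exists_tsum_powKernel_ball_le (d := d) he (by linarith)
  obtain ⟨C₂, hC₂, htail⟩ := exists_tsum_powKernel_tail_le (d := d) (e := 2 * e) (by linarith)
  refine ⟨(C₁ + C₂) / 2 ^ ((d : ℝ) + 2 * e), by positivity, fun a b hab => ?_⟩
  set N := {z | z ≠ a ∧ z ≠ b ∧ nrm (a - z) ≤ nrm (b - z)}
  set r := nrm (a - b) / 2 with hr_def
  have hr : 0 < r := half_pos (one_pos.trans_le (one_le_nrm (sub_ne_zero.mpr hab)))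
  have hfar : ∀ z ∈ N, r ≤ nrm (b - z) := fun z ⟨_, _, hz⟩ => by
    linarith [nrm_sub_triangle_right a b z]
  calc _ ≤ ∑' z : ↥(N ∩ {z | nrm (a - z) ≤ r}), (powKernel a e * powKernel b e) z +
        ∑' z : ↥(N ∩ {z | r ≤ nrm (a - z)}), (powKernel a e * powKernel b e) z :=
        ENNReal.tsum_subtype_le_add_of_subset_union _ fun z hz => by
          rcases le_total (nrm (a - z)) r with h | h
          exacts [Or.inl ⟨hz, h⟩, Or.inr ⟨hz, h⟩]
    _ ≤ ∑' z : {z | z ≠ a ∧ nrm (a - z) ≤ r}, powKernel a e z * ENNReal.ofReal (r ^ e) +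
        ∑' z : {z | z ≠ a ∧ r ≤ nrm (a - z)}, powKernel a (2 * e) z := by
        gcongr
        · refine ENNReal.tsum_subtype_le_of_subset_of_le
            (g := fun z => powKernel a e z * ENNReal.ofReal (r ^ e)) (fun z hz => ?_)
            fun z hz => ?_
          · exact ⟨hz.1.1, hz.2⟩
          · exact mul_le_mul_right (powKernel_le_ofReal_rpow he hr (hfar z hz.1)) _
        · refine ENNReal.tsum_subtype_le_of_subset_of_le (fun z hz => ?_) fun z hz => ?_
          · exact ⟨hz.1.1, hz.2⟩
          · rw [← powKernel_mul_self hz.1.1]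
            exact mul_le_mul_right (powKernel_le_ofReal_rpow he (hr.trans_le hz.2) hz.1.2.2) _
    _ ≤ ENNReal.ofReal (C₁ * r ^ ((d : ℝ) + e)) * ENNReal.ofReal (r ^ e) +
        ENNReal.ofReal (C₂ * r ^ ((d : ℝ) + 2 * e)) := by
        rw [ENNReal.tsum_mul_right]
        gcongr
        exacts [hball a r, htail a hr]
    _ = _ := by
        have hr_pow (p : ℝ) : 0 ≤ r ^ p := Real.rpow_nonneg hr.le p
        have hpow : r ^ ((d : ℝ) + 2 * e) =
            nrm (a - b) ^ ((d : ℝ) + 2 * e) / 2 ^ ((d : ℝ) + 2 * e) :=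
          Real.div_rpow (by linarith) zero_le_two _
        rw [← ENNReal.ofReal_mul (mul_nonneg hC₁ (hr_pow _)),
          ← ENNReal.ofReal_add (mul_nonneg (mul_nonneg hC₁ (hr_pow _)) (hr_pow _))
            (mul_nonneg hC₂ (hr_pow _)),
          mul_assoc, ← Real.rpow_add hr, add_assoc, ← two_mul, hpow]
        ring_nf

theorem exists_tsum_powKernel_mul_le {e : ℝ} (hde : -(d : ℝ) < e) (hde' : 2 * e < -d) :
    ∃ C : ℝ, 0 ≤ C ∧ ∀ a b : Fin d → ℤ, a ≠ b →
      ∑' z : {z | z ≠ a ∧ z ≠ b}, (powKernel a e * powKernel b e) z ≤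
        ENNReal.ofReal (C * nrm (a - b) ^ ((d : ℝ) + 2 * e)) := by
  obtain ⟨C, hC, hhalf⟩ := exists_tsum_powKernel_mul_le_of_nrm_le hde hde'
  refine ⟨2 * C, by positivity, fun a b hab => ?_⟩
  have hnonneg : 0 ≤ C * nrm (a - b) ^ ((d : ℝ) + 2 * e) :=
    mul_nonneg hC (Real.rpow_nonneg (nrm_nonneg _) _)
  calc _ ≤ ∑' z : {z | z ≠ a ∧ z ≠ b ∧ nrm (a - z) ≤ nrm (b - z)},
          (powKernel a e * powKernel b e) z +
        ∑' z : {z | z ≠ b ∧ z ≠ a ∧ nrm (b - z) ≤ nrm (a - z)},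
          (powKernel b e * powKernel a e) z := by
        rw [mul_comm (powKernel b e)]
        refine ENNReal.tsum_subtype_le_add_of_subset_union _ fun z ⟨hza, hzb⟩ => ?_
        rcases le_total (nrm (a - z)) (nrm (b - z)) with h | h
        exacts [Or.inl ⟨hza, hzb, h⟩, Or.inr ⟨hzb, hza, h⟩]
    _ ≤ ENNReal.ofReal (C * nrm (a - b) ^ ((d : ℝ) + 2 * e)) +
        ENNReal.ofReal (C * nrm (b - a) ^ ((d : ℝ) + 2 * e)) :=
        add_le_add (hhalf a b hab) (hhalf b a hab.symm)
    _ = _ := by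
        rw [nrm_sub_comm b a, ← ENNReal.ofReal_add hnonneg hnonneg]
        ring_nf

theorem exists_tsum_powKernel_mul_mul_le {e : ℝ} (hde : -(d : ℝ) < e) (hde' : 2 * e < -d) :
    ∃ C : ℝ, 0 ≤ C ∧ ∀ a b c : Fin d → ℤ, a ≠ b → a ≠ c → b ≠ c →
      ∑' z : {z | z ≠ a ∧ z ≠ b ∧ z ≠ c}, (powKernel a e * powKernel b e * powKernel c e) z ≤
        ENNReal.ofReal (C * nrm (a - b) ^ e *
          (nrm (a - c) ^ ((d : ℝ) + 2 * e) + nrm (b - c) ^ ((d : ℝ) + 2 * e))) := by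
  have he : e ≤ 0 := by linarith [(Nat.cast_nonneg d : (0 : ℝ) ≤ d)]
  obtain ⟨C, hC, htwo⟩ := exists_tsum_powKernel_mul_le hde hde'
  refine ⟨C / 2 ^ e, by positivity, fun a b c hab hac hbc => ?_⟩
  set r := nrm (a - b) / 2 with hr_def
  have hr : 0 < r := half_pos (one_pos.trans_le (one_le_nrm (sub_ne_zero.mpr hab)))
  calc _ ≤ ∑' z : {z | z ≠ a ∧ z ≠ c ∧ r ≤ nrm (b - z)},
          (powKernel a e * powKernel b e * powKernel c e) z +
        ∑' z : {z | z ≠ b ∧ z ≠ c ∧ r ≤ nrm (a - z)},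
          (powKernel a e * powKernel b e * powKernel c e) z := by
        refine ENNReal.tsum_subtype_le_add_of_subset_union _ fun z ⟨hza, hzb, hzc⟩ => ?_
        rcases le_total r (nrm (b - z)) with h | h
        · exact Or.inl ⟨hza, hzc, h⟩
        · exact Or.inr ⟨hzb, hzc, by linarith [nrm_sub_triangle_right a b z]⟩
    _ ≤ (∑' z : {z | z ≠ a ∧ z ≠ c}, (powKernel a e * powKernel c e) z) *
          ENNReal.ofReal (r ^ e) +
        (∑' z : {z | z ≠ b ∧ z ≠ c}, (powKernel b e * powKernel c e) z) *
          ENNReal.ofReal (r ^ e) := by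
        rw [← ENNReal.tsum_mul_right, ← ENNReal.tsum_mul_right]
        gcongr
        · refine ENNReal.tsum_subtype_le_of_subset_of_le
            (g := fun z => (powKernel a e * powKernel c e) z * ENNReal.ofReal (r ^ e))
            (fun z hz => ?_) fun z hz => ?_
          · exact ⟨hz.1, hz.2.1⟩
          · simp only [Pi.mul_apply]
            rw [mul_right_comm]
            exact mul_le_mul_right (powKernel_le_ofReal_rpow he hr hz.2.2) _
        · refine ENNReal.tsum_subtype_le_of_subset_of_le
            (g := fun z => (powKernel b e * powKernel c e) z * ENNReal.ofReal (r ^ e))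
            (fun z hz => ?_) fun z hz => ?_
          · exact ⟨hz.1, hz.2.1⟩
          · simp only [Pi.mul_apply]
            rw [mul_assoc, mul_comm]
            exact mul_le_mul_right (powKernel_le_ofReal_rpow he hr hz.2.2) _
    _ ≤ ENNReal.ofReal (C * nrm (a - c) ^ ((d : ℝ) + 2 * e)) * ENNReal.ofReal (r ^ e) +
        ENNReal.ofReal (C * nrm (b - c) ^ ((d : ℝ) + 2 * e)) * ENNReal.ofReal (r ^ e) := by
        gcongr
        exacts [htwo a c hac, htwo b c hbc]
    _ = _ := by
        have hpow : r ^ e = nrm (a - b) ^ e / 2 ^ e := Real.div_rpow (by linarith) zero_le_two _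
        have hnonneg (u : Fin d → ℤ) : 0 ≤ C * nrm u ^ ((d : ℝ) + 2 * e) :=
          mul_nonneg hC (Real.rpow_nonneg (nrm_nonneg _) _)
        rw [← ENNReal.ofReal_mul (hnonneg _), ← ENNReal.ofReal_mul (hnonneg _),
          ← ENNReal.ofReal_add (mul_nonneg (hnonneg _) (Real.rpow_nonneg hr.le _))
            (mul_nonneg (hnonneg _) (Real.rpow_nonneg hr.le _)), hpow]
        ring_nf

end Convolution

/-- For `d ≥ 5` there is `C < ∞` such that for all distinct nonzero
`x, y ∈ ℤ^d`,
`∑_{z ∉ {0,x,y}} |z|^{2-d} |x-z|^{2-d} |y-z|^{2-d}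
  ≤ C (|x|^{4-d}|y|^{2-d} + |x|^{2-d}|y|^{4-d} + |x-y|^{4-d}|x|^{2-d} + |x-y|^{4-d}|y|^{2-d})`. -/
theorem triple_convolution_upper_bound (d : ℕ) (hd : 5 ≤ d) :
    ∃ C : ℝ, 0 < C ∧ ∀ x y : Fin d → ℤ, x ≠ 0 → y ≠ 0 → x ≠ y →
      Summable (fun z : {z : Fin d → ℤ // z ≠ 0 ∧ z ≠ x ∧ z ≠ y} =>
        nrm z.1 ^ ((2 : ℝ) - d) * nrm (x - z.1) ^ ((2 : ℝ) - d) *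
          nrm (y - z.1) ^ ((2 : ℝ) - d)) ∧
      (∑' z : {z : Fin d → ℤ // z ≠ 0 ∧ z ≠ x ∧ z ≠ y},
          nrm z.1 ^ ((2 : ℝ) - d) * nrm (x - z.1) ^ ((2 : ℝ) - d) *
            nrm (y - z.1) ^ ((2 : ℝ) - d))
        ≤ C * (nrm x ^ ((4 : ℝ) - d) * nrm y ^ ((2 : ℝ) - d) +
               nrm x ^ ((2 : ℝ) - d) * nrm y ^ ((4 : ℝ) - d) +
               nrm (x - y) ^ ((4 : ℝ) - d) * nrm x ^ ((2 : ℝ) - d) +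
               nrm (x - y) ^ ((4 : ℝ) - d) * nrm y ^ ((2 : ℝ) - d)) := by
  have hd' : (5 : ℝ) ≤ d := by exact_mod_cast hd
  obtain ⟨C, hC, htriple⟩ :=
    exists_tsum_powKernel_mul_mul_le (d := d) (e := 2 - d) (by linarith) (by linarith)
  refine ⟨C + 1, by positivity, fun x y hx hy hxy => ?_⟩
  have hpow (u : Fin d → ℤ) (s : ℝ) : 0 ≤ nrm u ^ s := Real.rpow_nonneg (nrm_nonneg u) s
  have hterm (u v : Fin d → ℤ) (s t : ℝ) : 0 ≤ nrm u ^ s * nrm v ^ t :=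
    mul_nonneg (hpow u s) (hpow v t)
  have hzero (u : Fin d → ℤ) : nrm (0 - u) = nrm u := by rw [nrm_sub_comm, sub_zero]
  have key := htriple 0 x y hx.symm hy.symm hxy
  simp only [hzero, show (d : ℝ) + 2 * (2 - d) = 4 - d by ring] at key
  have h₁ := hterm x y (4 - d) (2 - d)
  have h₂ := hterm x y (2 - d) (4 - d)
  have h₃ := hterm (x - y) x (4 - d) (2 - d)
  have h₄ := hterm (x - y) y (4 - d) (2 - d)
  refine summable_and_tsum_le_of_tsum_ofReal_le (fun z => mul_nonneg (hterm _ _ _ _) (hpow _ _))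
    (mul_nonneg (by positivity) (by linarith)) ?_
  calc _ = _ := tsum_congr fun z => by
        simp only [Pi.mul_apply, powKernel, hzero, ENNReal.ofReal_mul (hterm _ _ _ _),
          ENNReal.ofReal_mul (hpow _ _)]
    _ ≤ _ := key
    _ ≤ _ := ENNReal.ofReal_le_ofReal ?_
  calc C * nrm x ^ ((2 : ℝ) - d) * (nrm y ^ ((4 : ℝ) - d) + nrm (x - y) ^ ((4 : ℝ) - d))
      = C * (nrm x ^ ((2 : ℝ) - d) * nrm y ^ ((4 : ℝ) - d) +
          nrm (x - y) ^ ((4 : ℝ) - d) * nrm x ^ ((2 : ℝ) - d)) := by ring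
    _ ≤ _ := mul_le_mul (by linarith) (by linarith) (by linarith) (by linarith)
end

section
/- For d ≥ 5 there exists C < ∞ such that for any pairwise distinct nonzero x, y, z ∈ ℤ^d, the sum Σ_{w ∈ ℤ^d \ {0,x,y,z}} |w|^{−d+2}·|w−x|^{−d+4}·|w−y|^{−d+4}·|w−z|^{−d+2} is bounded above by C·h_c(x,y,z), where h_c(x,y,z) = Σ_τ ⟨τ⟩^{−d+4}, the sum over all 16 spanning trees τ on the vertex set {0,x,y,z} of the product of the (d−4)-th negative powers of the Euclidean edge lengths of τ. -/
open scoped BigOperators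

/-- `h_c(x,y,z) = ∑_τ ⟨τ⟩^{4-d}`, the sum over the 16 spanning trees `τ` of the
complete graph on the vertex set `{0, x, y, z}` of the product of the `(d-4)`-th
negative powers of the Euclidean edge lengths of `τ`.  With edge labels
`1 = {0,x}, 2 = {0,y}, 3 = {0,z}, 4 = {x,y}, 5 = {x,z}, 6 = {y,z}`, the spanning trees
are the sixteen 3-subsets of edges that do not form a triangle. -/
noncomputable def hcFun (d : ℕ) (x y z : Fin d → ℤ) : ℝ :=
  let p1 := nrm x ^ ((4 : ℝ) - d)
  let p2 := nrm y ^ ((4 : ℝ) - d)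
  let p3 := nrm z ^ ((4 : ℝ) - d)
  let p4 := nrm (x - y) ^ ((4 : ℝ) - d)
  let p5 := nrm (x - z) ^ ((4 : ℝ) - d)
  let p6 := nrm (y - z) ^ ((4 : ℝ) - d)
  p1*p2*p3 + p1*p2*p5 + p1*p2*p6 + p1*p3*p4 + p1*p3*p6 + p1*p4*p5 + p1*p4*p6 +
  p1*p5*p6 + p2*p3*p4 + p2*p3*p5 + p2*p4*p5 + p2*p4*p6 + p2*p5*p6 + p3*p4*p5 +
  p3*p4*p6 + p3*p5*p6

/-!
Write `G_k(v) = |v|^{-k}` (`nrmInv k v`). Split `ℤ^d` according to which pole of the summand the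
point `w` is close to. A factor whose pole is far from `w` can be frozen, up to a factor `2^k`, at
its value at the nearby pole; what remains is a lattice sum of `G_k` over a ball (`≲ R^{d-k}` for
`k < d`), outside a ball (`≲ R^{d-k}` for `k > d`), or a convolution with fewer poles.

Since `|w - x| + |w - y| ≥ |x - y|`, one of the factors `G_{d-4}(w - x)`, `G_{d-4}(w - y)` can
always be frozen at `2^{d-4} G_{d-4}(x - y)`. This reduces the four-point sum to the three-point
sum `∑ G_{d-2}(w) G_{d-4}(w - x) G_{d-2}(w - z)`, which is bounded by the tree sum of the triangle
`{0, x, z}`; adding the edge `{x, y}` to a spanning tree of `{0, x, z}` gives a spanning tree of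
`{0, x, y, z}`.
-/

open Finset

namespace QuadrupleConvolution

variable {d : ℕ}

lemma inv_pow_min_le_add {a b : ℝ} (ha : 0 < a) (hb : 0 < b) (k : ℕ) :
    (min a b ^ k)⁻¹ ≤ (a ^ k)⁻¹ + (b ^ k)⁻¹ := by
  rcases min_choice a b with h | h <;> rw [h] <;> simp [ha.le, hb.le]

lemma sum_le_mul_of_le {ι : Type*} {s : Finset ι} {f g : ι → ℝ} {M B : ℝ} (hM : 0 ≤ M)
    (hfg : ∀ i ∈ s, f i ≤ M * g i) (hg : ∑ i ∈ s, g i ≤ B) :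
    ∑ i ∈ s, f i ≤ M * B :=
  (sum_le_sum hfg).trans (by rw [← mul_sum]; exact mul_le_mul_of_nonneg_left hg hM)

lemma nrm_nonneg (x : Fin d → ℤ) : 0 ≤ nrm x := Real.sqrt_nonneg _

lemma nrm_eq_norm (x : Fin d → ℤ) :
    nrm x = ‖(WithLp.toLp 2 fun i => (x i : ℝ) : EuclideanSpace ℝ (Fin d))‖ := by
  simp [nrm, EuclideanSpace.norm_eq]

lemma nrm_add_le (a b : Fin d → ℤ) : nrm (a + b) ≤ nrm a + nrm b := by
  have h : (WithLp.toLp 2 fun i => ((a + b) i : ℝ) : EuclideanSpace ℝ (Fin d)) =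
      WithLp.toLp 2 (fun i => (a i : ℝ)) + WithLp.toLp 2 (fun i => (b i : ℝ)) := by
    ext i
    simp
  rw [nrm_eq_norm, nrm_eq_norm, nrm_eq_norm, h]
  exact norm_add_le _ _

lemma nrm_neg (a : Fin d → ℤ) : nrm (-a) = nrm a := by simp [nrm]

lemma nrm_sub_comm (a b : Fin d → ℤ) : nrm (a - b) = nrm (b - a) := by
  rw [← neg_sub, nrm_neg]

lemma nrm_sub_le (a b c : Fin d → ℤ) : nrm (a - c) ≤ nrm (a - b) + nrm (b - c) := by
  simpa using nrm_add_le (a - b) (b - c)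

lemma nrm_le_add_nrm_sub (a b : Fin d → ℤ) : nrm a ≤ nrm b + nrm (a - b) := by
  simpa using nrm_add_le b (a - b)

lemma nrm_sub_le_add (a b : Fin d → ℤ) : nrm (a - b) ≤ nrm a + nrm b := by
  simpa [sub_eq_add_neg, nrm_neg] using nrm_add_le a (-b)

lemma one_le_nrm {x : Fin d → ℤ} (hx : x ≠ 0) : 1 ≤ nrm x := by
  obtain ⟨i, hi⟩ := Function.ne_iff.1 hx
  rw [nrm, Real.one_le_sqrt]
  calc (1 : ℝ) ≤ (x i : ℝ) ^ 2 := by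
        have : (1 : ℤ) ≤ x i ^ 2 := by nlinarith [Int.one_le_abs hi, sq_abs (x i)]
        exact_mod_cast this
    _ ≤ ∑ j, (x j : ℝ) ^ 2 :=
        single_le_sum (f := fun j => (x j : ℝ) ^ 2) (fun _ _ => sq_nonneg _) (mem_univ i)

lemma nrm_pos {x : Fin d → ℤ} (hx : x ≠ 0) : 0 < nrm x := one_pos.trans_le (one_le_nrm hx)

noncomputable def supNorm (x : Fin d → ℤ) : ℕ := univ.sup fun i => (x i).natAbs

lemma supNorm_le_iff {x : Fin d → ℤ} {N : ℕ} :
    supNorm x ≤ N ↔ ∀ i, (x i).natAbs ≤ N := by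
  simp [supNorm]

lemma abs_le_nrm (x : Fin d → ℤ) (i : Fin d) : |(x i : ℝ)| ≤ nrm x := by
  rw [nrm, ← Real.sqrt_sq_eq_abs]
  exact Real.sqrt_le_sqrt
    (single_le_sum (f := fun j => (x j : ℝ) ^ 2) (fun _ _ => sq_nonneg _) (mem_univ i))

lemma supNorm_le_nrm (x : Fin d → ℤ) : (supNorm x : ℝ) ≤ nrm x := by
  have h : supNorm x ≤ ⌊nrm x⌋₊ := supNorm_le_iff.2 fun i =>
    Nat.le_floor (by simpa [Nat.cast_natAbs] using abs_le_nrm x i)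
  exact (Nat.cast_le.2 h).trans (Nat.floor_le (nrm_nonneg x))

lemma nrm_le_sqrt_mul_supNorm (x : Fin d → ℤ) : nrm x ≤ √d * supNorm x := by
  have h : ∀ i, (x i : ℝ) ^ 2 ≤ (supNorm x : ℝ) ^ 2 := fun i => by
    rw [← sq_abs]
    gcongr
    simpa [Nat.cast_natAbs] using
      Nat.cast_le (α := ℝ).2 ((supNorm_le_iff (N := supNorm x)).1 le_rfl i)
  calc nrm x ≤ √(∑ _i : Fin d, (supNorm x : ℝ) ^ 2) :=
        Real.sqrt_le_sqrt (sum_le_sum fun i _ => h i)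
    _ = √d * supNorm x := by simp [Real.sqrt_mul, Real.sqrt_sq]

lemma one_le_supNorm {x : Fin d → ℤ} (hx : x ≠ 0) : 1 ≤ supNorm x := by
  obtain ⟨i, hi⟩ := Function.ne_iff.1 hx
  exact (Int.natAbs_pos.2 hi).trans_le ((supNorm_le_iff (N := supNorm x)).1 le_rfl i)

noncomputable def cube (d N : ℕ) : Finset (Fin d → ℤ) :=
  Fintype.piFinset fun _ => Icc (-(N : ℤ)) N

lemma mem_cube {N : ℕ} {x : Fin d → ℤ} : x ∈ cube d N ↔ supNorm x ≤ N := by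
  simp only [cube, Fintype.mem_piFinset, mem_Icc, supNorm_le_iff]
  exact forall_congr' fun i => by omega

lemma card_cube (N : ℕ) : #(cube d N) = (2 * N + 1) ^ d := by
  simp only [cube, Fintype.card_piFinset, Int.card_Icc, prod_const, card_univ, Fintype.card_fin]
  congr 1
  omega

lemma card_le_of_supNorm_sub_eq (c : Fin d → ℤ) {n : ℕ} (hn : 1 ≤ n)
    {s : Finset (Fin d → ℤ)} (hs : ∀ w ∈ s, supNorm (w - c) = n) :
    (#s : ℝ) ≤ 2 * d * (3 * n) ^ (d - 1) := by
  have hsub : cube d (n - 1) ⊆ cube d n :=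
    fun w hw => mem_cube.2 ((mem_cube.1 hw).trans (by omega))
  have hcard : #s ≤ (2 * n + 1) ^ d - (2 * (n - 1) + 1) ^ d := by
    rw [← card_cube, ← card_cube, ← card_sdiff_of_subset hsub]
    refine card_le_card_of_injOn (· - c) (fun w hw => ?_) (fun a _ b _ h => sub_left_injective h)
    simp only [coe_sdiff, Set.mem_sdiff, mem_coe, mem_cube, hs w hw]
    omega
  have hn' : (1 : ℝ) ≤ n := by exact_mod_cast hn
  have hdiff : (2 * (n : ℝ) + 1) ^ d - (2 * n - 1) ^ d ≤ 2 * d * (3 * n) ^ (d - 1) := by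
    refine (le_abs_self _).trans ((abs_pow_sub_pow_le _ _ d).trans ?_)
    rw [abs_of_nonneg (show (0 : ℝ) ≤ 2 * n - 1 by linarith),
      abs_of_nonneg (show (0 : ℝ) ≤ 2 * n + 1 by positivity),
      max_eq_left (by linarith), show 2 * (n : ℝ) + 1 - (2 * n - 1) = 2 by ring,
      abs_of_nonneg (by norm_num)]
    gcongr
    linarith
  calc (#s : ℝ) ≤ ((2 * n + 1) ^ d - (2 * (n - 1) + 1) ^ d : ℕ) := by exact_mod_cast hcard
    _ = (2 * (n : ℝ) + 1) ^ d - (2 * n - 1) ^ d := by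
      rw [Nat.cast_sub (Nat.pow_le_pow_left (by omega) d)]
      push_cast [Nat.cast_sub hn]
      ring
    _ ≤ 2 * d * (3 * n) ^ (d - 1) := hdiff

noncomputable def nrmInv (k : ℕ) (v : Fin d → ℤ) : ℝ := (nrm v ^ k)⁻¹

lemma nrmInv_nonneg (k : ℕ) (v : Fin d → ℤ) : 0 ≤ nrmInv k v :=
  inv_nonneg.2 (pow_nonneg (nrm_nonneg v) k)

lemma nrmInv_sub_comm (k : ℕ) (a b : Fin d → ℤ) : nrmInv k (a - b) = nrmInv k (b - a) := by
  rw [nrmInv, nrmInv, nrm_sub_comm]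

lemma nrm_rpow_natCast_sub {k : ℕ} (hk : k ≤ d) (v : Fin d → ℤ) :
    nrm v ^ ((k : ℝ) - d) = nrmInv (d - k) v := by
  rw [show (k : ℝ) - d = -((d - k : ℕ) : ℝ) by push_cast [Nat.cast_sub hk]; ring,
    Real.rpow_neg (nrm_nonneg v), Real.rpow_natCast, nrmInv]

lemma nrmInv_mul_sq {v : Fin d → ℤ} (hv : v ≠ 0) {k n : ℕ} (hn : n = k + 2) :
    nrmInv n v * nrm v ^ 2 = nrmInv k v := by
  have := nrm_pos hv
  rw [nrmInv, nrmInv, hn, pow_add]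
  field_simp

lemma nrmInv_mul_self (v : Fin d → ℤ) {k n : ℕ} (hn : n = k + k) :
    nrmInv k v * nrmInv k v = nrmInv n v := by
  simp only [nrmInv, hn, pow_add, mul_inv]

lemma nrmInv_le_of_le_two_mul {v : Fin d → ℤ} {t : ℝ} (ht : 0 < t) (h : t ≤ 2 * nrm v)
    (k : ℕ) : nrmInv k v ≤ 2 ^ k * (t ^ k)⁻¹ := by
  have e : 2 ^ k * (t ^ k)⁻¹ = ((t / 2) ^ k)⁻¹ := by rw [div_pow, inv_div, div_eq_mul_inv]
  rw [nrmInv, e]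
  exact inv_anti₀ (by positivity) (pow_le_pow_left₀ (by positivity) (by linarith) k)

lemma nrmInv_le_two_pow_mul {u v : Fin d → ℤ} (hu : u ≠ 0) (h : nrm u ≤ 2 * nrm v)
    (k : ℕ) : nrmInv k v ≤ 2 ^ k * nrmInv k u :=
  nrmInv_le_of_le_two_mul (nrm_pos hu) h k

lemma nrmInv_le_inv_supNorm_pow {v : Fin d → ℤ} (hv : v ≠ 0) (k : ℕ) :
    nrmInv k v ≤ ((supNorm v : ℝ) ^ k)⁻¹ := by
  have : (0 : ℝ) < supNorm v := by exact_mod_cast one_le_supNorm hv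
  exact inv_anti₀ (by positivity) (pow_le_pow_left₀ this.le (supNorm_le_nrm v) k)

lemma sum_le_sum_shells {c : Fin d → ℤ} {s : Finset (Fin d → ℤ)}
    {f : (Fin d → ℤ) → ℝ} {g : ℕ → ℝ} {m N : ℕ} (hm : 1 ≤ m)
    (hg : ∀ n, 0 ≤ g n)
    (hs : ∀ w ∈ s, supNorm (w - c) ∈ Icc m N)
    (hf : ∀ w ∈ s, f w ≤ g (supNorm (w - c))) :
    ∑ w ∈ s, f w ≤ ∑ n ∈ Icc m N, 2 * d * (3 * n) ^ (d - 1) * g n := by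
  calc ∑ w ∈ s, f w ≤ ∑ w ∈ s, g (supNorm (w - c)) := sum_le_sum hf
    _ = ∑ n ∈ Icc m N, ∑ w ∈ s with supNorm (w - c) = n, g n := by
      rw [← sum_fiberwise_of_maps_to hs]
      exact sum_congr rfl fun n _ => sum_congr rfl fun w hw => by rw [(mem_filter.1 hw).2]
    _ ≤ ∑ n ∈ Icc m N, 2 * d * (3 * n) ^ (d - 1) * g n := sum_le_sum fun n hn => by
      rw [sum_const, nsmul_eq_mul]
      exact mul_le_mul_of_nonneg_right (card_le_of_supNorm_sub_eq c
        (hm.trans (mem_Icc.1 hn).1) fun w hw => (mem_filter.1 hw).2) (hg n)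

lemma sum_nrmInv_sub_le {k j : ℕ} (hkj : k + j = d) (hj : 1 ≤ j) (c : Fin d → ℤ) {R : ℝ}
    (hR : 0 ≤ R) {s : Finset (Fin d → ℤ)} (hs : ∀ w ∈ s, w ≠ c ∧ nrm (w - c) ≤ R) :
    ∑ w ∈ s, nrmInv k (w - c) ≤ 2 * d * 3 ^ (d - 1) * R ^ j := by
  set N := ⌊R⌋₊
  have hterm : ∀ n ∈ Icc 1 N,
      2 * d * (3 * (n : ℝ)) ^ (d - 1) * ((n : ℝ) ^ k)⁻¹ ≤
        2 * d * 3 ^ (d - 1) * (N : ℝ) ^ (j - 1) := by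
    intro n hn
    have hn1 : (1 : ℝ) ≤ n := by exact_mod_cast (mem_Icc.1 hn).1
    have hnN : (n : ℝ) ≤ N := by exact_mod_cast (mem_Icc.1 hn).2
    have hsplit : (n : ℝ) ^ (d - 1) = n ^ k * n ^ (j - 1) := by rw [← pow_add]; congr 1; omega
    rw [mul_pow, hsplit]
    calc 2 * d * (3 ^ (d - 1) * ((n : ℝ) ^ k * n ^ (j - 1))) * ((n : ℝ) ^ k)⁻¹
        = 2 * d * 3 ^ (d - 1) * (n : ℝ) ^ (j - 1) := by field_simp
      _ ≤ 2 * d * 3 ^ (d - 1) * (N : ℝ) ^ (j - 1) := by gcongr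
  calc ∑ w ∈ s, nrmInv k (w - c)
      ≤ ∑ n ∈ Icc 1 N, 2 * d * (3 * (n : ℝ)) ^ (d - 1) * ((n : ℝ) ^ k)⁻¹ :=
        sum_le_sum_shells le_rfl (fun n => by positivity)
          (fun w hw => mem_Icc.2 ⟨one_le_supNorm (sub_ne_zero.2 (hs w hw).1),
            Nat.le_floor ((supNorm_le_nrm _).trans (hs w hw).2)⟩)
          (fun w hw => nrmInv_le_inv_supNorm_pow (sub_ne_zero.2 (hs w hw).1) k)
    _ ≤ ∑ _n ∈ Icc 1 N, 2 * d * 3 ^ (d - 1) * (N : ℝ) ^ (j - 1) := sum_le_sum hterm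
    _ = 2 * d * 3 ^ (d - 1) * (N : ℝ) ^ j := by
      rw [sum_const, Nat.card_Icc, nsmul_eq_mul, Nat.add_sub_cancel]
      obtain ⟨i, rfl⟩ := Nat.exists_eq_add_of_le' hj
      simp only [Nat.add_sub_cancel, pow_succ]
      ring
    _ ≤ 2 * d * 3 ^ (d - 1) * R ^ j := by gcongr; exact Nat.floor_le hR

lemma sum_Icc_inv_sq_le {m : ℕ} (hm : 1 ≤ m) (N : ℕ) :
    ∑ n ∈ Icc m N, ((n : ℝ) ^ 2)⁻¹ ≤ 2 / m := by
  have h := sum_Ioo_inv_sq_le (α := ℝ) (m - 1) (N + 1)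
  rw [Nat.cast_sub hm, Nat.cast_one, sub_add_cancel] at h
  refine le_trans (sum_le_sum_of_subset_of_nonneg (fun n hn => ?_) fun _ _ _ => by positivity) h
  rw [mem_Icc] at hn
  rw [mem_Ioo]
  omega

lemma sum_nrmInv_le_of_le_nrm (hd : 0 < d) {k j : ℕ} (hkj : k = d + j) (hj : 1 ≤ j) {R : ℝ}
    (hR : 0 < R) {s : Finset (Fin d → ℤ)} (hs : ∀ w ∈ s, w ≠ 0 ∧ R ≤ nrm w) :
    ∑ w ∈ s, nrmInv k w ≤ 4 * d * 3 ^ (d - 1) * (√d / R) ^ j := by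
  have hsqrt : 0 < √(d : ℝ) := Real.sqrt_pos.2 (by exact_mod_cast hd)
  set m := ⌈R / √d⌉₊
  set N := s.sup supNorm
  have hm : 1 ≤ m := Nat.one_le_iff_ne_zero.2 fun h => by
    have := Nat.ceil_eq_zero.1 h
    have : 0 < R / √d := by positivity
    linarith
  have hRm : R / √d ≤ m := Nat.le_ceil _
  have hshell : ∀ w ∈ s, supNorm (w - 0) ∈ Icc m N := fun w hw => by
    rw [sub_zero, mem_Icc]
    refine ⟨Nat.ceil_le.2 ?_, le_sup hw⟩
    rw [div_le_iff₀ hsqrt, mul_comm]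
    exact (hs w hw).2.trans (nrm_le_sqrt_mul_supNorm w)
  have hterm : ∀ n ∈ Icc m N, 2 * d * (3 * (n : ℝ)) ^ (d - 1) * ((n : ℝ) ^ k)⁻¹ ≤
      2 * d * 3 ^ (d - 1) / (m : ℝ) ^ (j - 1) * ((n : ℝ) ^ 2)⁻¹ := by
    intro n hn
    have hmn : (m : ℝ) ≤ n := by exact_mod_cast (mem_Icc.1 hn).1
    have hm0 : (0 : ℝ) < m := by exact_mod_cast hm
    have hsplit : (n : ℝ) ^ k = n ^ (d - 1) * (n ^ (j - 1) * n ^ 2) := by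
      rw [← pow_add, ← pow_add]; congr 1; omega
    rw [mul_pow, hsplit]
    have : (0 : ℝ) < n := hm0.trans_le hmn
    calc 2 * d * (3 ^ (d - 1) * (n : ℝ) ^ (d - 1)) *
          ((n : ℝ) ^ (d - 1) * (n ^ (j - 1) * n ^ 2))⁻¹
        = 2 * d * 3 ^ (d - 1) / (n : ℝ) ^ (j - 1) * ((n : ℝ) ^ 2)⁻¹ := by field_simp
      _ ≤ 2 * d * 3 ^ (d - 1) / (m : ℝ) ^ (j - 1) * ((n : ℝ) ^ 2)⁻¹ := by gcongr
  calc ∑ w ∈ s, nrmInv k w = ∑ w ∈ s, nrmInv k (w - 0) := by simp only [sub_zero]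
    _ ≤ ∑ n ∈ Icc m N, 2 * d * (3 * (n : ℝ)) ^ (d - 1) * ((n : ℝ) ^ k)⁻¹ :=
        sum_le_sum_shells hm (fun n => by positivity) hshell
          (fun w hw => nrmInv_le_inv_supNorm_pow (sub_ne_zero.2 (hs w hw).1) k)
    _ ≤ 2 * d * 3 ^ (d - 1) / (m : ℝ) ^ (j - 1) * ∑ n ∈ Icc m N, ((n : ℝ) ^ 2)⁻¹ := by
        rw [mul_sum]; exact sum_le_sum hterm
    _ ≤ 2 * d * 3 ^ (d - 1) / (m : ℝ) ^ (j - 1) * (2 / m) := by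
        gcongr
        exact sum_Icc_inv_sq_le hm N
    _ = 4 * d * 3 ^ (d - 1) / (m : ℝ) ^ j := by
      obtain ⟨i, rfl⟩ := Nat.exists_eq_add_of_le' hj
      simp only [Nat.add_sub_cancel, pow_succ]
      field_simp
      ring
    _ ≤ 4 * d * 3 ^ (d - 1) * (√d / R) ^ j := by
      rw [div_eq_mul_inv _ ((m : ℝ) ^ j), ← inv_div, inv_pow]
      gcongr

noncomputable def twoPointKernel (z w : Fin d → ℤ) : ℝ :=
  nrmInv (d - 2) w * nrmInv (d - 2) (w - z)

noncomputable def threePointKernel (x z w : Fin d → ℤ) : ℝ :=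
  nrmInv (d - 2) w * nrmInv (d - 4) (w - x) * nrmInv (d - 2) (w - z)

noncomputable def fourPointKernel (x y z w : Fin d → ℤ) : ℝ :=
  nrmInv (d - 2) w * nrmInv (d - 4) (w - x) * nrmInv (d - 4) (w - y) * nrmInv (d - 2) (w - z)

lemma twoPointKernel_nonneg (z w : Fin d → ℤ) : 0 ≤ twoPointKernel z w :=
  mul_nonneg (nrmInv_nonneg _ _) (nrmInv_nonneg _ _)

lemma threePointKernel_nonneg (x z w : Fin d → ℤ) : 0 ≤ threePointKernel x z w :=
  mul_nonneg (mul_nonneg (nrmInv_nonneg _ _) (nrmInv_nonneg _ _)) (nrmInv_nonneg _ _)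

lemma fourPointKernel_nonneg (x y z w : Fin d → ℤ) : 0 ≤ fourPointKernel x y z w :=
  mul_nonneg (mul_nonneg (mul_nonneg (nrmInv_nonneg _ _) (nrmInv_nonneg _ _))
    (nrmInv_nonneg _ _)) (nrmInv_nonneg _ _)

/-- The sum over the three spanning trees of the triangle `{0, x, z}`. -/
noncomputable def triangleTreeSum (x z : Fin d → ℤ) : ℝ :=
  nrmInv (d - 4) x * nrmInv (d - 4) (x - z) + nrmInv (d - 4) x * nrmInv (d - 4) z +
    nrmInv (d - 4) (x - z) * nrmInv (d - 4) z

lemma sum_twoPointKernel_le_of_near_zero (hd : 4 ≤ d) {z : Fin d → ℤ} (hz : z ≠ 0)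
    {s : Finset (Fin d → ℤ)} (hs : ∀ w ∈ s, w ≠ 0 ∧ 2 * nrm w ≤ nrm z) :
    ∑ w ∈ s, twoPointKernel z w ≤ 2 ^ (d - 2) * (2 * d * 3 ^ (d - 1)) * nrmInv (d - 4) z := by
  calc _ ≤ 2 ^ (d - 2) * nrmInv (d - 2) z * (2 * d * 3 ^ (d - 1) * nrm z ^ 2) := by
        refine sum_le_mul_of_le (mul_nonneg (by positivity) (nrmInv_nonneg _ _)) (fun w hw => ?_)
          (sum_nrmInv_sub_le (k := d - 2) (by omega) one_le_two 0 (nrm_nonneg z) fun w hw => ?_)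
        · have h := nrmInv_le_two_pow_mul hz (v := w - z)
            (by linarith [(hs w hw).2, nrm_le_add_nrm_sub z w, nrm_sub_comm z w]) (d - 2)
          rw [twoPointKernel, sub_zero, mul_comm _ (nrmInv _ w)]
          exact mul_le_mul_of_nonneg_left h (nrmInv_nonneg _ _)
        · rw [sub_zero]
          exact ⟨(hs w hw).1, by linarith [(hs w hw).2, nrm_nonneg w]⟩
    _ = _ := by rw [← nrmInv_mul_sq hz (k := d - 4) (n := d - 2) (by omega)]; ring

lemma sum_twoPointKernel_le_of_near (hd : 4 ≤ d) {z : Fin d → ℤ} (hz : z ≠ 0)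
    {s : Finset (Fin d → ℤ)}
    (hs : ∀ w ∈ s, w ≠ z ∧ nrm z ≤ 2 * nrm w ∧ nrm w ≤ 2 * nrm z) :
    ∑ w ∈ s, twoPointKernel z w ≤
      2 ^ (d - 2) * (9 * (2 * d * 3 ^ (d - 1))) * nrmInv (d - 4) z := by
  calc _ ≤ 2 ^ (d - 2) * nrmInv (d - 2) z * (2 * d * 3 ^ (d - 1) * (3 * nrm z) ^ 2) := by
        refine sum_le_mul_of_le (mul_nonneg (by positivity) (nrmInv_nonneg _ _)) (fun w hw => ?_)
          (sum_nrmInv_sub_le (k := d - 2) (by omega) one_le_two z (by positivity [nrm_nonneg z])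
            fun w hw => ⟨(hs w hw).1, by linarith [(hs w hw).2.2, nrm_sub_le_add w z]⟩)
        exact mul_le_mul_of_nonneg_right (nrmInv_le_two_pow_mul hz (hs w hw).2.1 _)
          (nrmInv_nonneg _ _)
    _ = _ := by rw [← nrmInv_mul_sq hz (k := d - 4) (n := d - 2) (by omega)]; ring

lemma sum_twoPointKernel_le_of_far (hd : 5 ≤ d) {z : Fin d → ℤ} (hz : z ≠ 0)
    {s : Finset (Fin d → ℤ)} (hs : ∀ w ∈ s, w ≠ 0 ∧ 2 * nrm z ≤ nrm w) :
    ∑ w ∈ s, twoPointKernel z w ≤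
      2 ^ (d - 2) * (4 * d * 3 ^ (d - 1) * √d ^ (d - 4)) * nrmInv (d - 4) z := by
  have hz0 := nrm_pos hz
  calc _ ≤ 2 ^ (d - 2) * (4 * d * 3 ^ (d - 1) * (√d / nrm z) ^ (d - 4)) := by
        refine sum_le_mul_of_le (by positivity) (fun w hw => ?_) (sum_nrmInv_le_of_le_nrm
          (by omega) (k := 2 * d - 4) (by omega) (by omega) hz0
          fun w hw => ⟨(hs w hw).1, by linarith [(hs w hw).2]⟩)
        have h := nrmInv_le_two_pow_mul (hs w hw).1 (v := w - z)
          (by linarith [(hs w hw).2, nrm_le_add_nrm_sub w z]) (d - 2)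
        calc twoPointKernel z w ≤ nrmInv (d - 2) w * (2 ^ (d - 2) * nrmInv (d - 2) w) :=
              mul_le_mul_of_nonneg_left h (nrmInv_nonneg _ _)
          _ = 2 ^ (d - 2) * nrmInv (2 * d - 4) w := by
              rw [← nrmInv_mul_self w (k := d - 2) (n := 2 * d - 4) (by omega)]; ring
    _ = _ := by rw [div_pow, nrmInv]; ring

theorem exists_sum_twoPointKernel_le (hd : 5 ≤ d) : ∃ C > 0, ∀ z : Fin d → ℤ, z ≠ 0 →
    ∀ s : Finset (Fin d → ℤ), (∀ w ∈ s, w ≠ 0 ∧ w ≠ z) →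
    ∑ w ∈ s, twoPointKernel z w ≤ C * nrmInv (d - 4) z := by
  set A : ℝ := 2 * d * 3 ^ (d - 1)
  refine ⟨2 ^ (d - 2) * A + (2 ^ (d - 2) * (9 * A) +
    2 ^ (d - 2) * (4 * d * 3 ^ (d - 1) * √d ^ (d - 4))), by positivity, fun z hz s hs => ?_⟩
  rw [← sum_filter_add_sum_filter_not s (fun w => 2 * nrm w ≤ nrm z),
    ← sum_filter_add_sum_filter_not (s.filter fun w => ¬2 * nrm w ≤ nrm z)
      (fun w => nrm w ≤ 2 * nrm z), filter_filter, filter_filter, add_mul, add_mul]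
  refine add_le_add (sum_twoPointKernel_le_of_near_zero (by omega) hz fun w hw => ?_)
    (add_le_add (sum_twoPointKernel_le_of_near (by omega) hz fun w hw => ?_)
      (sum_twoPointKernel_le_of_far hd hz fun w hw => ?_)) <;>
  obtain ⟨hws, hw⟩ := mem_filter.1 hw
  · exact ⟨(hs w hws).1, hw⟩
  · exact ⟨(hs w hws).2, by linarith [hw.1], hw.2⟩
  · exact ⟨(hs w hws).1, by linarith [hw.2]⟩

lemma sum_threePointKernel_le_of_near (hd : 4 ≤ d) {x z : Fin d → ℤ} (hx : x ≠ 0)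
    (hxz : x ≠ z) {s : Finset (Fin d → ℤ)}
    (hs : ∀ w ∈ s, w ≠ x ∧ 2 * nrm (w - x) ≤ min (nrm x) (nrm (x - z))) :
    ∑ w ∈ s, threePointKernel x z w ≤
      2 ^ (d - 2) * 2 ^ (d - 2) * (2 * d * 3 ^ (d - 1)) *
        (nrmInv (d - 4) x * nrmInv (d - 4) (x - z)) := by
  have hxz' : x - z ≠ 0 := sub_ne_zero.2 hxz
  set D := min (nrm x) (nrm (x - z))
  have hD : 0 < D := lt_min (nrm_pos hx) (nrm_pos hxz')
  have hD4 : D ^ 4 ≤ nrm x ^ 2 * nrm (x - z) ^ 2 := by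
    calc D ^ 4 = D ^ 2 * D ^ 2 := by ring
      _ ≤ _ := by gcongr; exacts [min_le_left _ _, min_le_right _ _]
  set M := 2 ^ (d - 2) * nrmInv (d - 2) x * (2 ^ (d - 2) * nrmInv (d - 2) (x - z))
  have hM : 0 ≤ M := mul_nonneg (mul_nonneg (by positivity) (nrmInv_nonneg _ _))
    (mul_nonneg (by positivity) (nrmInv_nonneg _ _))
  calc _ ≤ M * (2 * d * 3 ^ (d - 1) * D ^ 4) := by
        refine sum_le_mul_of_le hM (fun w hw => ?_) (sum_nrmInv_sub_le (k := d - 4) (by omega)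
          (by norm_num) x hD.le fun w hw =>
            ⟨(hs w hw).1, by linarith [(hs w hw).2, nrm_nonneg (w - x)]⟩)
        have hw := (hs w hw).2
        have h₁ := nrmInv_le_two_pow_mul hx (v := w) (by
          linarith [nrm_le_add_nrm_sub x w, nrm_sub_comm x w, min_le_left (nrm x) (nrm (x - z))])
          (d - 2)
        have h₂ := nrmInv_le_two_pow_mul hxz' (v := w - z) (by
          linarith [nrm_sub_le x w z, nrm_sub_comm x w, min_le_right (nrm x) (nrm (x - z))])
          (d - 2)
        calc threePointKernel x z w
            = nrmInv (d - 4) (w - x) * (nrmInv (d - 2) w * nrmInv (d - 2) (w - z)) := by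
              rw [threePointKernel]; ring
          _ ≤ nrmInv (d - 4) (w - x) * M :=
              mul_le_mul_of_nonneg_left (mul_le_mul h₁ h₂ (nrmInv_nonneg _ _)
                ((nrmInv_nonneg _ _).trans h₁)) (nrmInv_nonneg _ _)
          _ = M * nrmInv (d - 4) (w - x) := mul_comm _ _
    _ ≤ M * (2 * d * 3 ^ (d - 1) * (nrm x ^ 2 * nrm (x - z) ^ 2)) := by gcongr
    _ = 2 ^ (d - 2) * 2 ^ (d - 2) * (2 * d * 3 ^ (d - 1)) *
          (nrmInv (d - 2) x * nrm x ^ 2 * (nrmInv (d - 2) (x - z) * nrm (x - z) ^ 2)) := by ring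
    _ = _ := by rw [nrmInv_mul_sq hx (k := d - 4) (n := d - 2) (by omega),
      nrmInv_mul_sq hxz' (k := d - 4) (n := d - 2) (by omega)]

lemma threePointKernel_le_of_far {x z w : Fin d → ℤ} (hx : x ≠ 0) (hxz : x ≠ z)
    (h : min (nrm x) (nrm (x - z)) ≤ 2 * nrm (w - x)) :
    threePointKernel x z w ≤
      2 ^ (d - 4) * (nrmInv (d - 4) x + nrmInv (d - 4) (x - z)) * twoPointKernel z w := by
  have hfar := (nrmInv_le_of_le_two_mul (lt_min (nrm_pos hx) (nrm_pos (sub_ne_zero.2 hxz))) h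
    (d - 4)).trans (mul_le_mul_of_nonneg_left
      (inv_pow_min_le_add (nrm_pos hx) (nrm_pos (sub_ne_zero.2 hxz)) _) (by positivity))
  calc threePointKernel x z w = nrmInv (d - 4) (w - x) * twoPointKernel z w := by
        rw [threePointKernel, twoPointKernel]; ring
    _ ≤ _ := mul_le_mul_of_nonneg_right hfar (twoPointKernel_nonneg z w)

theorem exists_sum_threePointKernel_le (hd : 5 ≤ d) : ∃ C > 0, ∀ x z : Fin d → ℤ,
    x ≠ 0 → z ≠ 0 → x ≠ z →
    ∀ s : Finset (Fin d → ℤ), (∀ w ∈ s, w ≠ 0 ∧ w ≠ x ∧ w ≠ z) →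
    ∑ w ∈ s, threePointKernel x z w ≤ C * triangleTreeSum x z := by
  obtain ⟨C₂, hC₂, htwo⟩ := exists_sum_twoPointKernel_le hd
  refine ⟨2 ^ (d - 2) * 2 ^ (d - 2) * (2 * d * 3 ^ (d - 1)) + 2 ^ (d - 4) * C₂, by positivity,
    fun x z hx hz hxz s hs => ?_⟩
  set D := min (nrm x) (nrm (x - z))
  have hM : 0 ≤ 2 ^ (d - 4) * (nrmInv (d - 4) x + nrmInv (d - 4) (x - z)) :=
    mul_nonneg (by positivity) (add_nonneg (nrmInv_nonneg _ _) (nrmInv_nonneg _ _))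
  have hnear := sum_threePointKernel_le_of_near (by omega) hx hxz
    (s := s.filter fun w => 2 * nrm (w - x) ≤ D)
    fun w hw => ⟨(hs w (mem_filter.1 hw).1).2.1, (mem_filter.1 hw).2⟩
  have hfar := sum_le_mul_of_le hM
    (fun w hw => threePointKernel_le_of_far hx hxz (le_of_lt (not_le.1 (mem_filter.1 hw).2)))
    (htwo z hz (s.filter fun w => ¬2 * nrm (w - x) ≤ D)
      fun w hw => ⟨(hs w (mem_filter.1 hw).1).1, (hs w (mem_filter.1 hw).1).2.2⟩)
  rw [← sum_filter_add_sum_filter_not s (fun w => 2 * nrm (w - x) ≤ D)]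
  refine (add_le_add hnear hfar).trans ?_
  have := nrmInv_nonneg (d - 4) x
  have := nrmInv_nonneg (d - 4) z
  have := nrmInv_nonneg (d - 4) (x - z)
  rw [triangleTreeSum, ← sub_nonneg]
  ring_nf
  positivity

lemma fourPointKernel_comm (x y z w : Fin d → ℤ) :
    fourPointKernel x y z w = fourPointKernel y x z w := by
  rw [fourPointKernel, fourPointKernel]; ring

lemma fourPointKernel_le {x y z w : Fin d → ℤ} (hxy : x ≠ y)
    (h : nrm (x - y) ≤ 2 * nrm (w - y)) :
    fourPointKernel x y z w ≤ 2 ^ (d - 4) * nrmInv (d - 4) (x - y) * threePointKernel x z w := by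
  have hfreeze := nrmInv_le_two_pow_mul (sub_ne_zero.2 hxy) h (d - 4)
  calc fourPointKernel x y z w = nrmInv (d - 4) (w - y) * threePointKernel x z w := by
        rw [fourPointKernel, threePointKernel]; ring
    _ ≤ _ := mul_le_mul_of_nonneg_right hfreeze (threePointKernel_nonneg x z w)

lemma triangleTreeSum_add_le_hcFun (hd : 4 ≤ d) (x y z : Fin d → ℤ) :
    nrmInv (d - 4) (x - y) * (triangleTreeSum x z + triangleTreeSum y z) ≤ hcFun d x y z := by
  have h4 := nrm_rpow_natCast_sub (d := d) (k := 4) hd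
  simp only [Nat.cast_ofNat] at h4
  have h₁ := nrmInv_nonneg (d - 4) x
  have h₂ := nrmInv_nonneg (d - 4) y
  have h₃ := nrmInv_nonneg (d - 4) z
  have h₄ := nrmInv_nonneg (d - 4) (x - y)
  have h₅ := nrmInv_nonneg (d - 4) (x - z)
  have h₆ := nrmInv_nonneg (d - 4) (y - z)
  simp only [hcFun, h4, triangleTreeSum]
  generalize nrmInv (d - 4) x = p₁, nrmInv (d - 4) y = p₂, nrmInv (d - 4) z = p₃,
    nrmInv (d - 4) (x - y) = p₄, nrmInv (d - 4) (x - z) = p₅, nrmInv (d - 4) (y - z) = p₆ at *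
  rw [← sub_nonneg]
  ring_nf
  positivity

theorem exists_sum_fourPointKernel_le (hd : 5 ≤ d) : ∃ C > 0, ∀ x y z : Fin d → ℤ,
    x ≠ 0 → y ≠ 0 → z ≠ 0 → x ≠ y → x ≠ z → y ≠ z →
    ∀ s : Finset (Fin d → ℤ), (∀ w ∈ s, w ≠ 0 ∧ w ≠ x ∧ w ≠ y ∧ w ≠ z) →
    ∑ w ∈ s, fourPointKernel x y z w ≤ C * hcFun d x y z := by
  obtain ⟨C₃, hC₃, hthree⟩ := exists_sum_threePointKernel_le hd
  refine ⟨2 ^ (d - 4) * C₃, by positivity, fun x y z hx hy hz hxy hxz hyz s hs => ?_⟩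
  have hM : 0 ≤ 2 ^ (d - 4) * nrmInv (d - 4) (x - y) :=
    mul_nonneg (by positivity) (nrmInv_nonneg _ _)
  have hy_far := sum_le_mul_of_le hM
    (fun w hw => fourPointKernel_le hxy (mem_filter.1 hw).2)
    (hthree x z hx hz hxz (s.filter fun w => nrm (x - y) ≤ 2 * nrm (w - y))
      fun w hw => by
        obtain ⟨h0, hwx, -, hwz⟩ := hs w (mem_filter.1 hw).1
        exact ⟨h0, hwx, hwz⟩)
  have hx_far := sum_le_mul_of_le (f := fourPointKernel x y z) hM
    (fun w hw => by
      rw [fourPointKernel_comm, nrmInv_sub_comm]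
      refine fourPointKernel_le hxy.symm ?_
      linarith [not_le.1 (mem_filter.1 hw).2, nrm_sub_le x w y, nrm_sub_comm x w,
        nrm_sub_comm x y])
    (hthree y z hy hz hyz (s.filter fun w => ¬nrm (x - y) ≤ 2 * nrm (w - y))
      fun w hw => by
        obtain ⟨h0, -, hwy, hwz⟩ := hs w (mem_filter.1 hw).1
        exact ⟨h0, hwy, hwz⟩)
  rw [← sum_filter_add_sum_filter_not s (fun w => nrm (x - y) ≤ 2 * nrm (w - y))]
  calc _ ≤ 2 ^ (d - 4) * C₃ *
        (nrmInv (d - 4) (x - y) * (triangleTreeSum x z + triangleTreeSum y z)) := by linarith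
    _ ≤ _ := by gcongr; exact triangleTreeSum_add_le_hcFun (by omega) x y z

end QuadrupleConvolution

open QuadrupleConvolution

/-- For `d ≥ 5` there is `C < ∞` such that for pairwise distinct
nonzero `x, y, z ∈ ℤ^d`,
`∑_{w ∉ {0,x,y,z}} |w|^{2-d} |w-x|^{4-d} |w-y|^{4-d} |w-z|^{2-d} ≤ C · h_c(x,y,z)`. -/
theorem quadruple_convolution_tree_bound (d : ℕ) (hd : 5 ≤ d) :
    ∃ C : ℝ, 0 < C ∧ ∀ x y z : Fin d → ℤ,
      x ≠ 0 → y ≠ 0 → z ≠ 0 → x ≠ y → x ≠ z → y ≠ z →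
      Summable (fun w : {w : Fin d → ℤ // w ≠ 0 ∧ w ≠ x ∧ w ≠ y ∧ w ≠ z} =>
        nrm w.1 ^ ((2 : ℝ) - d) * nrm (w.1 - x) ^ ((4 : ℝ) - d) *
          nrm (w.1 - y) ^ ((4 : ℝ) - d) * nrm (w.1 - z) ^ ((2 : ℝ) - d)) ∧
      (∑' w : {w : Fin d → ℤ // w ≠ 0 ∧ w ≠ x ∧ w ≠ y ∧ w ≠ z},
          nrm w.1 ^ ((2 : ℝ) - d) * nrm (w.1 - x) ^ ((4 : ℝ) - d) *
            nrm (w.1 - y) ^ ((4 : ℝ) - d) * nrm (w.1 - z) ^ ((2 : ℝ) - d))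
        ≤ C * hcFun d x y z := by
  obtain ⟨C, hC, hfour⟩ := exists_sum_fourPointKernel_le hd
  refine ⟨C, hC, fun x y z hx hy hz hxy hxz hyz => ?_⟩
  have h2 := nrm_rpow_natCast_sub (d := d) (k := 2) (by omega)
  have h4 := nrm_rpow_natCast_sub (d := d) (k := 4) (by omega)
  simp only [Nat.cast_ofNat] at h2 h4
  simp only [h2, h4]
  have hbound : ∀ u : Finset {w : Fin d → ℤ // w ≠ 0 ∧ w ≠ x ∧ w ≠ y ∧ w ≠ z},
      ∑ w ∈ u, fourPointKernel x y z w.1 ≤ C * hcFun d x y z := fun u => by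
    rw [show ∑ w ∈ u, fourPointKernel x y z w.1 =
        ∑ w ∈ u.map (Function.Embedding.subtype _), fourPointKernel x y z w from
      (sum_map u (Function.Embedding.subtype _) (fourPointKernel x y z)).symm]
    refine hfour x y z hx hy hz hxy hxz hyz _ fun w hw => ?_
    obtain ⟨w, -, rfl⟩ := mem_map.1 hw
    exact w.2
  have hnonneg : 0 ≤ fun w : {w : Fin d → ℤ // w ≠ 0 ∧ w ≠ x ∧ w ≠ y ∧ w ≠ z} =>
      fourPointKernel x y z w.1 := fun w => fourPointKernel_nonneg x y z w.1
  have hsum := summable_of_sum_le hnonneg hbound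
  exact ⟨hsum, hsum.tsum_le_of_sum_le hbound⟩
end
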